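/- arXiv:2210.09286 — 3 statements merged into one kernel-verified Lean document; each statement's English description precedes it below -/
import Mathlib

section
/- For every ℋ-measurable function Z : Ω → ℝ there exists a 𝒢-measurable function W : Ω → ℝ such that Z(ω) = W(ω) for all ω in the event {s < τ}. Equivalently, the trace σ-algebra of ℋ on the event {s < τ} coincides with the trace σ-algebra of 𝒢 on {s < τ}. -/
open MeasureTheory
open scoped ENNReal

/-- The σ-algebra of sets that agree on `S` with some `𝒢`-measurable set. -/
def agreeOn {Ω : Type*} (𝒢 : MeasurableSpace Ω) (S : Set Ω) : MeasurableSpace Ω where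
  MeasurableSet' A := ∃ B, MeasurableSet[𝒢] B ∧ ∀ ω ∈ S, (ω ∈ A ↔ ω ∈ B)
  measurableSet_empty := ⟨∅, MeasurableSet.empty, fun _ _ => Iff.rfl⟩
  measurableSet_compl := by
    rintro A ⟨B, hB, hAB⟩
    exact ⟨Bᶜ, hB.compl, fun ω hω => not_congr (hAB ω hω)⟩
  measurableSet_iUnion := by
    intro f hf
    choose g hg hfg using hf
    refine ⟨⋃ n, g n, MeasurableSet.iUnion hg, fun ω hω => ?_⟩
    simp only [Set.mem_iUnion]
    exact exists_congr fun n => hfg n ω hω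

theorem measurable_tan : Measurable Real.tan := by
  have : Real.tan = fun x => Real.sin x / Real.cos x := funext Real.tan_eq_sin_div_cos
  rw [this]
  exact Real.continuous_sin.measurable.div Real.continuous_cos.measurable

/-- With `ℐ_s = σ({τ > r} : r ∈ [0,s])` and `ℋ = 𝒢 ⊔ ℐ_s`, every
`ℋ`-measurable function `Z` coincides on the event `{s < τ}` with some `𝒢`-measurable
function `W`. -/
theorem stmt4 {Ω : Type*} (𝒢 : MeasurableSpace Ω) (ℐ ℋ : MeasurableSpace Ω) {m𝔉 : MeasurableSpace Ω}
    (h𝒢 : 𝒢 ≤ m𝔉)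
    (τ : Ω → ℝ≥0∞) (hτ : Measurable τ) (s : ℝ≥0∞)
    (hℐ : ℐ = MeasurableSpace.generateFrom {A | ∃ r ≤ s, A = {ω | r < τ ω}})
    (hℋ : ℋ = 𝒢 ⊔ ℐ)
    (Z : Ω → ℝ) (hZ : Measurable[ℋ] Z) :
    ∃ W : Ω → ℝ, Measurable[𝒢] W ∧ ∀ ω ∈ {ω | s < τ ω}, Z ω = W ω := by
  classical
  set S : Set Ω := {ω | s < τ ω} with hSdef
  -- ℋ is contained in the σ-algebra of sets agreeing with a 𝒢-set on S
  have hle : ℋ ≤ agreeOn 𝒢 S := by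
    rw [hℋ]
    refine sup_le (fun A hA => ⟨A, hA, fun _ _ => Iff.rfl⟩) ?_
    rw [hℐ]
    refine MeasurableSpace.generateFrom_le ?_
    rintro A ⟨r, hr, rfl⟩
    refine ⟨Set.univ, MeasurableSet.univ, fun ω hω => ?_⟩
    simp only [Set.mem_setOf_eq, Set.mem_univ, iff_true]
    exact lt_of_le_of_lt hr hω
  -- the truncated function
  set Y : Ω → ℝ := fun ω => Real.arctan (Z ω) with hYdef
  have hY : Measurable[agreeOn 𝒢 S] Y :=
    Real.continuous_arctan.measurable.comp (hZ.mono hle le_rfl)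
  -- level sets of Y agree with 𝒢-sets on S
  have hlevel : ∀ q : ℚ, ∃ B, MeasurableSet[𝒢] B ∧
      ∀ ω ∈ S, (Y ω < (q : ℝ) ↔ ω ∈ B) := by
    intro q
    obtain ⟨B, hB, hAB⟩ := hY (measurableSet_Iio (a := (q : ℝ)))
    exact ⟨B, hB, fun ω hω => hAB ω hω⟩
  choose B hBmeas hBiff using hlevel
  -- the candidate, built from an infimum over rationals in [-2, 2]
  set ι := {q : ℚ // |(q : ℝ)| ≤ 2} with hιdef
  have hne : Nonempty ι := ⟨⟨0, by norm_num⟩⟩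
  set W₀ : Ω → ℝ := fun ω => ⨅ q : ι, if ω ∈ B q.1 then ((q.1 : ℝ)) else 2 with hW₀def
  have hW₀ : Measurable[𝒢] W₀ := by
    refine Measurable.iInf fun q => Measurable.ite (hBmeas q.1) measurable_const measurable_const
  refine ⟨fun ω => Real.tan (W₀ ω), measurable_tan.comp hW₀, fun ω hω => ?_⟩
  -- on S, W₀ ω = arctan (Z ω)
  have hpi2 : Real.pi / 2 < 2 := by
    have := Real.pi_lt_d2
    linarith
  have hYlt : Y ω < 2 := lt_trans (Real.arctan_lt_pi_div_two (Z ω)) hpi2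
  have hYgt : -2 < Y ω := by
    have := Real.neg_pi_div_two_lt_arctan (Z ω)
    have : -(Real.pi / 2) < Y ω := this
    linarith
  have hbdd : BddBelow (Set.range fun q : ι => if ω ∈ B q.1 then ((q.1 : ℝ)) else 2) := by
    refine ⟨-2, ?_⟩
    rintro x ⟨q, rfl⟩
    have := abs_le.mp q.2
    dsimp only
    split_ifs
    · linarith [this.1]
    · norm_num
  have hkey : W₀ ω = Y ω := by
    refine le_antisymm ?_ ?_
    · -- W₀ ω ≤ Y ω, using density
      refine le_of_forall_gt_imp_ge_of_dense fun c hc => ?_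
      obtain ⟨q, hq1, hq2⟩ := exists_rat_btwn (lt_min hc hYlt)
      have hq2c : (q : ℝ) < c := lt_of_lt_of_le hq2 (min_le_left _ _)
      have hq22 : (q : ℝ) < 2 := lt_of_lt_of_le hq2 (min_le_right _ _)
      have hqabs : |(q : ℝ)| ≤ 2 := abs_le.mpr ⟨by linarith, le_of_lt hq22⟩
      have hmem : ω ∈ B q := (hBiff q ω hω).mp hq1
      have : W₀ ω ≤ if ω ∈ B q then ((q : ℝ)) else 2 := ciInf_le hbdd (⟨q, hqabs⟩ : ι)
      rw [if_pos hmem] at this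
      exact this.trans (le_of_lt hq2c)
    · -- Y ω ≤ W₀ ω : Y ω is a lower bound
      refine le_ciInf fun q => ?_
      split_ifs with h
      · exact le_of_lt ((hBiff q.1 ω hω).mpr h)
      · exact le_of_lt hYlt
  show Z ω = Real.tan (W₀ ω)
  rw [hkey]
  exact (Real.tan_arctan (Z ω)).symm
end

section
/- For every integrable random variable Y on (Ω, 𝔉, ℙ), one has, almost surely, E[Y·1_{{s<τ}} | ℋ] = e^{Λ} · E[Y·1_{{s<τ}} | 𝒢] · 1_{{s<τ}}. -/
open MeasureTheory
open scoped ENNReal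

lemma stmt5_L0 {Ω : Type*} {m𝔉 : MeasurableSpace Ω} (μ : Measure Ω)
    (𝒢 : MeasurableSpace Ω) (h𝒢 : 𝒢 ≤ m𝔉) (A : Set Ω) (hA : MeasurableSet[m𝔉] A)
    (w : Ω → ℝ) (hw : Measurable[𝒢] w)
    (heq : ∀ t, MeasurableSet[𝒢] t → μ (t ∩ A) = ∫⁻ ω in t, ENNReal.ofReal (w ω) ∂μ)
    (φ : Ω → ℝ≥0∞) (hφ : Measurable[𝒢] φ) :
    ∫⁻ ω, φ ω * A.indicator 1 ω ∂μ = ∫⁻ ω, φ ω * ENNReal.ofReal (w ω) ∂μ := by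
  have hwℱ : Measurable[m𝔉] w := hw.mono h𝒢 le_rfl
  have hwm : Measurable[m𝔉] (fun ω => ENNReal.ofReal (w ω)) := ENNReal.measurable_ofReal.comp hwℱ
  have hindm : Measurable[m𝔉] (A.indicator (1 : Ω → ℝ≥0∞)) :=
    (@measurable_one ℝ≥0∞ Ω _ m𝔉 _).indicator hA
  have hφm : Measurable[m𝔉] φ := hφ.mono h𝒢 le_rfl
  have hmeq : (μ.withDensity (A.indicator 1)).trim h𝒢
      = (μ.withDensity (fun ω => ENNReal.ofReal (w ω))).trim h𝒢 := by
    refine @Measure.ext Ω 𝒢 _ _ (fun t ht => ?_)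
    rw [trim_measurableSet_eq h𝒢 ht, trim_measurableSet_eq h𝒢 ht,
      withDensity_apply _ (h𝒢 _ ht), withDensity_apply _ (h𝒢 _ ht)]
    have : ∫⁻ ω in t, A.indicator 1 ω ∂μ = μ (t ∩ A) := by
      rw [lintegral_indicator hA]
      simp only [Pi.one_apply]
      rw [setLIntegral_one, Measure.restrict_apply hA, Set.inter_comm]
    rw [this, heq t ht]
  have e1 : ∫⁻ ω, φ ω * A.indicator 1 ω ∂μ
      = ∫⁻ ω, φ ω ∂(μ.withDensity (A.indicator 1)) := by
    rw [lintegral_withDensity_eq_lintegral_mul μ hindm hφm]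
    exact lintegral_congr fun ω => mul_comm _ _
  have e2 : ∫⁻ ω, φ ω * ENNReal.ofReal (w ω) ∂μ
      = ∫⁻ ω, φ ω ∂(μ.withDensity (fun ω => ENNReal.ofReal (w ω))) := by
    rw [lintegral_withDensity_eq_lintegral_mul μ hwm hφm]
    exact lintegral_congr fun ω => mul_comm _ _
  rw [e1, e2, ← lintegral_trim h𝒢 hφ, ← lintegral_trim h𝒢 hφ, hmeq]

/-- Real-valued transfer: `∫ ψ·1_A = ∫ ψ·w` for `𝒢`-measurable `ψ`. -/
lemma stmt5_L1 {Ω : Type*} {m𝔉 : MeasurableSpace Ω} (μ : Measure Ω)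
    (𝒢 : MeasurableSpace Ω) (h𝒢 : 𝒢 ≤ m𝔉) (A : Set Ω) (hA : MeasurableSet[m𝔉] A)
    (w : Ω → ℝ) (hw : Measurable[𝒢] w) (hwnn : ∀ ω, 0 ≤ w ω)
    (heq : ∀ t, MeasurableSet[𝒢] t → μ (t ∩ A) = ∫⁻ ω in t, ENNReal.ofReal (w ω) ∂μ)
    (ψ : Ω → ℝ) (hψ : Measurable[𝒢] ψ)
    (h1 : Integrable (fun ω => ψ ω * A.indicator (fun _ => (1 : ℝ)) ω) μ)
    (h2 : Integrable (fun ω => ψ ω * w ω) μ) :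
    ∫ ω, ψ ω * A.indicator (fun _ => (1 : ℝ)) ω ∂μ = ∫ ω, ψ ω * w ω ∂μ := by
  have key : ∀ (χ : Ω → ℝ), Measurable[𝒢] χ →
      ∫⁻ ω, ENNReal.ofReal (χ ω * A.indicator (fun _ => (1 : ℝ)) ω) ∂μ
        = ∫⁻ ω, ENNReal.ofReal (χ ω * w ω) ∂μ := by
    intro χ hχ
    have h0 := stmt5_L0 μ 𝒢 h𝒢 A hA w hw heq (fun ω => ENNReal.ofReal (χ ω))
      (ENNReal.measurable_ofReal.comp hχ)
    calc ∫⁻ ω, ENNReal.ofReal (χ ω * A.indicator (fun _ => (1 : ℝ)) ω) ∂μ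
        = ∫⁻ ω, ENNReal.ofReal (χ ω) * A.indicator 1 ω ∂μ := by
          refine lintegral_congr fun ω => ?_
          by_cases h : ω ∈ A <;>
            simp [Set.indicator_of_mem, Set.indicator_of_notMem, h]
      _ = ∫⁻ ω, ENNReal.ofReal (χ ω) * ENNReal.ofReal (w ω) ∂μ := h0
      _ = ∫⁻ ω, ENNReal.ofReal (χ ω * w ω) ∂μ := by
          refine lintegral_congr fun ω => ?_
          rw [ENNReal.ofReal_mul' (hwnn ω)]
  rw [integral_eq_lintegral_pos_part_sub_lintegral_neg_part h1,
    integral_eq_lintegral_pos_part_sub_lintegral_neg_part h2]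
  have eneg : ∫⁻ ω, ENNReal.ofReal (-(ψ ω * A.indicator (fun _ => (1 : ℝ)) ω)) ∂μ
      = ∫⁻ ω, ENNReal.ofReal (-(ψ ω * w ω)) ∂μ := by
    have := key (fun ω => -ψ ω) hψ.neg
    simpa [neg_mul] using this
  rw [key ψ hψ, eneg]

/-- With `ℐ_s = σ({τ > r} : r ∈ [0,s])`, `ℋ = 𝒢 ⊔ ℐ_s`, and
`ℙ(s < τ | 𝒢) = e^{−Λ}` a.s. for a nonnegative `𝒢`-measurable `Λ`, for every
integrable `Y` one has, almost surely,
`E[Y·1_{s<τ} | ℋ] = e^{Λ} · E[Y·1_{s<τ} | 𝒢] · 1_{s<τ}`. -/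
theorem stmt5 {Ω : Type*} (𝒢 : MeasurableSpace Ω) (ℐ ℋ : MeasurableSpace Ω) {m𝔉 : MeasurableSpace Ω} (μ : Measure Ω) [IsProbabilityMeasure μ]
    (h𝒢 : 𝒢 ≤ m𝔉)
    (τ : Ω → ℝ≥0∞) (hτ : Measurable τ) (s : ℝ≥0∞)
    (hℐ : ℐ = MeasurableSpace.generateFrom {A | ∃ r ≤ s, A = {ω | r < τ ω}})
    (hℋ : ℋ = 𝒢 ⊔ ℐ)
    (Λ : Ω → ℝ) (hΛmeas : Measurable[𝒢] Λ) (hΛnn : ∀ ω, 0 ≤ Λ ω)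
    (hsurv : μ[Set.indicator {ω | s < τ ω} (fun _ => (1 : ℝ)) | 𝒢]
      =ᵐ[μ] fun ω => Real.exp (-Λ ω))
    (Y : Ω → ℝ) (hY : Integrable Y μ) :
    μ[Set.indicator {ω | s < τ ω} Y | ℋ]
      =ᵐ[μ] fun ω =>
        Real.exp (Λ ω) * ((μ[Set.indicator {ω' | s < τ ω'} Y | 𝒢]) ω)
          * Set.indicator {ω' | s < τ ω'} (fun _ => (1 : ℝ)) ω := by
  letI : MeasurableSpace Ω := m𝔉
  set A : Set Ω := {ω | s < τ ω} with hAdef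
  have hAm : MeasurableSet[m𝔉] A := by exact measurableSet_lt measurable_const hτ
  have hℐ𝔉 : ℐ ≤ m𝔉 := by
    rw [hℐ]
    refine MeasurableSpace.generateFrom_le ?_
    rintro t ⟨r, hr, rfl⟩
    exact (by exact measurableSet_lt measurable_const hτ)
  have hℋ𝔉 : ℋ ≤ m𝔉 := by rw [hℋ]; exact sup_le h𝒢 hℐ𝔉
  have h𝒢ℋ : 𝒢 ≤ ℋ := by rw [hℋ]; exact le_sup_left
  have hAH : MeasurableSet[ℋ] A := by
    rw [hℋ]
    exact (le_sup_right : ℐ ≤ 𝒢 ⊔ ℐ) _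
      (by rw [hℐ]; exact MeasurableSpace.measurableSet_generateFrom ⟨s, le_rfl, rfl⟩)
  -- the trace lemma
  have trace : ∀ H, MeasurableSet[ℋ] H → ∃ G, MeasurableSet[𝒢] G ∧ H ∩ A = G ∩ A := by
    let m : MeasurableSpace Ω :=
      { MeasurableSet' := fun H => ∃ G, MeasurableSet[𝒢] G ∧ H ∩ A = G ∩ A
        measurableSet_empty := ⟨∅, @MeasurableSet.empty Ω 𝒢, rfl⟩
        measurableSet_compl := by
          rintro H ⟨G, hG, hGA⟩
          refine ⟨Gᶜ, hG.compl, ?_⟩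
          ext ω
          have := Set.ext_iff.mp hGA ω
          simp only [Set.mem_inter_iff, Set.mem_compl_iff] at this ⊢
          tauto
        measurableSet_iUnion := by
          intro f hf
          choose G hG hGA using hf
          exact ⟨⋃ i, G i, MeasurableSet.iUnion hG, by
            rw [Set.iUnion_inter, Set.iUnion_inter]
            exact Set.iUnion_congr hGA⟩ }
    have h1 : 𝒢 ≤ m := fun t ht => ⟨t, ht, rfl⟩
    have h2 : ℐ ≤ m := by
      rw [hℐ]
      refine MeasurableSpace.generateFrom_le ?_
      rintro t ⟨r, hr, rfl⟩
      refine ⟨Set.univ, MeasurableSet.univ, ?_⟩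
      rw [Set.univ_inter]
      ext ω
      simp only [Set.mem_inter_iff, Set.mem_setOf_eq, hAdef]
      exact ⟨fun h => h.2, fun h => ⟨lt_of_le_of_lt hr h, h⟩⟩
    have hm : ℋ ≤ m := by rw [hℋ]; exact sup_le h1 h2
    exact fun H hH => hm H hH
  -- notation
  set g : Ω → ℝ := μ[Set.indicator {ω' | s < τ ω'} Y | 𝒢] with hgdef
  have hgSM : StronglyMeasurable[𝒢] g := stronglyMeasurable_condExp
  have hgInt : Integrable g μ := integrable_condExp
  have hindInt : Integrable (A.indicator (fun _ => (1 : ℝ))) μ := by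
    exact (integrable_const (1 : ℝ)).indicator hAm
  have hYA : Integrable (A.indicator Y) μ := by exact hY.indicator hAm
  have hexpΛ : Measurable[𝒢] fun ω => Real.exp (Λ ω) := hΛmeas.exp
  -- the measure identity `heq`
  have hwmeas : Measurable[𝒢] fun ω => Real.exp (-Λ ω) := hΛmeas.neg.exp
  have hwInt : Integrable (fun ω => Real.exp (-Λ ω)) μ := by
    refine Integrable.mono' (integrable_const (1 : ℝ))
      ((hwmeas.mono h𝒢 le_rfl).aestronglyMeasurable) (Filter.Eventually.of_forall fun ω => ?_)
    rw [Real.norm_eq_abs, abs_of_pos (Real.exp_pos _)]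
    exact Real.exp_le_one_iff.mpr (neg_nonpos.mpr (hΛnn ω))
  have heq : ∀ t, MeasurableSet[𝒢] t →
      μ (t ∩ A) = ∫⁻ ω in t, ENNReal.ofReal (Real.exp (-Λ ω)) ∂μ := by
    intro t ht
    have hreal : ∫ ω in t, A.indicator (fun _ => (1 : ℝ)) ω ∂μ
        = ∫ ω in t, Real.exp (-Λ ω) ∂μ := by
      rw [← setIntegral_condExp h𝒢 hindInt ht]
      exact integral_congr_ae (ae_restrict_of_ae hsurv)
    have lhs1 : ∫⁻ ω in t, ENNReal.ofReal (A.indicator (fun _ => (1 : ℝ)) ω) ∂μ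
        = μ (t ∩ A) := by
      have : ∀ ω, ENNReal.ofReal (A.indicator (fun _ => (1 : ℝ)) ω)
          = A.indicator (1 : Ω → ℝ≥0∞) ω := by
        intro ω; by_cases h : ω ∈ A <;> simp [h]
      rw [lintegral_congr this, lintegral_indicator hAm]
      simp only [Pi.one_apply]
      rw [setLIntegral_one, Measure.restrict_apply hAm, Set.inter_comm]
    rw [← lhs1,
      ← ofReal_integral_eq_lintegral_ofReal (hindInt.restrict)
        (Filter.Eventually.of_forall fun ω => Set.indicator_nonneg (fun _ _ => zero_le_one) ω),
      ← ofReal_integral_eq_lintegral_ofReal (hwInt.restrict)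
        (Filter.Eventually.of_forall fun ω => (Real.exp_pos _).le),
      hreal]
  -- the candidate function
  set f : Ω → ℝ := fun ω => Real.exp (Λ ω) * g ω * A.indicator (fun _ => (1 : ℝ)) ω with hfdef
  have hfmeasble : Measurable[ℋ] f := by
    refine Measurable.mul (Measurable.mul ?_ ?_) ?_
    · exact hexpΛ.mono h𝒢ℋ le_rfl
    · exact hgSM.measurable.mono h𝒢ℋ le_rfl
    · exact (@measurable_const ℝ Ω _ ℋ 1).indicator hAH
  have hfmeas : StronglyMeasurable[ℋ] f := by exact hfmeasble.stronglyMeasurable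
  have habs : ∀ ω, (‖f ω‖₊ : ℝ≥0∞)
      = ENNReal.ofReal (Real.exp (Λ ω) * |g ω|) * A.indicator 1 ω := by
    intro ω
    rw [← enorm_eq_nnnorm, Real.enorm_eq_ofReal_abs]
    by_cases h : ω ∈ A
    · simp only [hfdef, Set.indicator_of_mem h, Pi.one_apply, mul_one]
      rw [abs_mul, abs_of_pos (Real.exp_pos _)]
    · simp [hfdef, Set.indicator_of_notMem h]
  have hφ𝒢 : Measurable[𝒢] fun ω => ENNReal.ofReal (Real.exp (Λ ω) * |g ω|) :=
    (hexpΛ.mul (@Measurable.abs ℝ Ω _ _ _ 𝒢 g _ _ hgSM.measurable)).ennreal_ofReal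
  have hfInt : Integrable f μ := by
    refine ⟨(hfmeas.mono hℋ𝔉).aestronglyMeasurable, ?_⟩
    rw [HasFiniteIntegral]
    calc ∫⁻ ω, (‖f ω‖₊ : ℝ≥0∞) ∂μ
        = ∫⁻ ω, ENNReal.ofReal (Real.exp (Λ ω) * |g ω|) * A.indicator 1 ω ∂μ :=
          lintegral_congr habs
      _ = ∫⁻ ω, ENNReal.ofReal (Real.exp (Λ ω) * |g ω|)
            * ENNReal.ofReal (Real.exp (-Λ ω)) ∂μ :=
          stmt5_L0 μ 𝒢 h𝒢 A hAm _ hwmeas heq _ hφ𝒢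
      _ = ∫⁻ ω, (‖g ω‖₊ : ℝ≥0∞) ∂μ := by
          refine lintegral_congr fun ω => ?_
          rw [← ENNReal.ofReal_mul' (Real.exp_pos _).le]
          have hgg : Real.exp (Λ ω) * |g ω| * Real.exp (-Λ ω) = |g ω| := by
            rw [mul_comm (Real.exp (Λ ω)) |g ω|, mul_assoc, ← Real.exp_add,
              add_neg_cancel, Real.exp_zero, mul_one]
          rw [hgg, ← Real.enorm_eq_ofReal_abs, enorm_eq_nnnorm]
      _ < ⊤ := hgInt.2
  -- set-integral identity
  have hsets : ∀ H, MeasurableSet[ℋ] H → μ H < ⊤ →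
      ∫ ω in H, f ω ∂μ = ∫ ω in H, A.indicator Y ω ∂μ := by
    intro H hH _
    obtain ⟨G, hG, hGA⟩ := trace H hH
    set c : Ω → ℝ := fun ω => Real.exp (Λ ω) * g ω with hcdef
    have hc𝒢 : Measurable[𝒢] c := hexpΛ.mul hgSM.measurable
    have hfind : ∀ ω, f ω = A.indicator c ω := by
      intro ω; by_cases h : ω ∈ A <;> simp [hfdef, hcdef, Set.indicator_of_mem,
        Set.indicator_of_notMem, h]
    have hψ𝒢 : Measurable[𝒢] (G.indicator c) := hc𝒢.indicator hG
    have hψind : ∀ ω, G.indicator c ω * A.indicator (fun _ => (1 : ℝ)) ω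
        = G.indicator f ω := by
      intro ω
      by_cases hωG : ω ∈ G <;> by_cases hωA : ω ∈ A <;>
        simp [hfdef, hcdef, Set.indicator_of_mem, Set.indicator_of_notMem, hωG, hωA]
    have hψw : ∀ ω, G.indicator c ω * Real.exp (-Λ ω) = G.indicator g ω := by
      intro ω
      by_cases hωG : ω ∈ G
      · simp only [Set.indicator_of_mem hωG, hcdef]
        rw [mul_comm (Real.exp (Λ ω)) (g ω), mul_assoc, ← Real.exp_add,
          add_neg_cancel, Real.exp_zero, mul_one]
      · simp [Set.indicator_of_notMem hωG]
    have h1 : Integrable (fun ω => G.indicator c ω * A.indicator (fun _ => (1 : ℝ)) ω) μ := by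
      exact (hfInt.indicator (h𝒢 G hG)).congr (Filter.Eventually.of_forall fun ω => (hψind ω).symm)
    have h2 : Integrable (fun ω => G.indicator c ω * Real.exp (-Λ ω)) μ := by
      exact (hgInt.indicator (h𝒢 G hG)).congr (Filter.Eventually.of_forall fun ω => (hψw ω).symm)
    have hL1 := stmt5_L1 μ 𝒢 h𝒢 A hAm _ hwmeas (fun ω => (Real.exp_pos _).le) heq
      (G.indicator c) hψ𝒢 h1 h2
    calc ∫ ω in H, f ω ∂μ
        = ∫ ω in H, A.indicator c ω ∂μ := integral_congr_ae
          (ae_restrict_of_ae (Filter.Eventually.of_forall hfind))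
      _ = ∫ ω in H ∩ A, c ω ∂μ := setIntegral_indicator hAm
      _ = ∫ ω in G ∩ A, c ω ∂μ := by rw [hGA]
      _ = ∫ ω in G, A.indicator c ω ∂μ := (setIntegral_indicator hAm).symm
      _ = ∫ ω, G.indicator (A.indicator c) ω ∂μ := (integral_indicator (h𝒢 G hG)).symm
      _ = ∫ ω, G.indicator c ω * A.indicator (fun _ => (1 : ℝ)) ω ∂μ := by
          refine integral_congr_ae (Filter.Eventually.of_forall fun ω => ?_)
          by_cases hωG : ω ∈ G <;> by_cases hωA : ω ∈ A <;>
            simp [Set.indicator_of_mem, Set.indicator_of_notMem, hωG, hωA]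
      _ = ∫ ω, G.indicator c ω * Real.exp (-Λ ω) ∂μ := hL1
      _ = ∫ ω, G.indicator g ω ∂μ := integral_congr_ae
          (Filter.Eventually.of_forall hψw)
      _ = ∫ ω in G, g ω ∂μ := integral_indicator (h𝒢 G hG)
      _ = ∫ ω in G, A.indicator Y ω ∂μ := setIntegral_condExp h𝒢 hYA hG
      _ = ∫ ω in G ∩ A, Y ω ∂μ := setIntegral_indicator hAm
      _ = ∫ ω in H ∩ A, Y ω ∂μ := by rw [hGA]
      _ = ∫ ω in H, A.indicator Y ω ∂μ := (setIntegral_indicator hAm).symm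
  -- conclude
  haveI : SigmaFinite (μ.trim hℋ𝔉) := by
    have : IsFiniteMeasure (μ.trim hℋ𝔉) := by
      constructor
      rw [trim_measurableSet_eq hℋ𝔉 MeasurableSet.univ]
      exact measure_lt_top μ _
    infer_instance
  exact (ae_eq_condExp_of_forall_setIntegral_eq hℋ𝔉 hYA
    (fun H hH _ => hfInt.integrableOn) hsets
    ⟨f, hfmeas, Filter.EventuallyEq.refl _ _⟩).symm
end

section
/- For every t ≥ 0 the random variable Λ_{t∧τ} is integrable, and the process M_t := 1_{{τ ≤ t}} − Λ_{t∧τ}, t ≥ 0, is a martingale with respect to the enlarged filtration (ℱ_t)_{t≥0}. -/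
open MeasureTheory Filter Finset
open scoped ENNReal Topology

/-!
The compensator increment `Λ_{t∧τ} - Λ_{s∧τ} = ∫_s^t 1_{τ > u} dΛ_u` is the limit of the
right-endpoint Riemann–Stieltjes sums `∑ (Λ_{p_{i+1}} - Λ_{p_i}) 1_{τ > p_{i+1}}`. Each increment
`Λ_{p_{i+1}} - Λ_{p_i}` is `𝔉̂_{p_{i+1}}`-measurable, so conditioning replaces `1_{τ > p_{i+1}}` by
`e^{-Λ_{p_{i+1}}}`, and those sums converge to `e^{-Λ_s} - e^{-Λ_t}`. Both families of sums are
dominated by their limits, so Fatou's lemma passes to the limit in `ℝ≥0∞` (where `Λ_t` need not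
be integrable), giving `E[1_B (Λ_{t∧τ} - Λ_{s∧τ})] = E[1_B (e^{-Λ_s} - e^{-Λ_t})]
= E[1_B (1_{τ > s} - 1_{τ > t})]` for `B ∈ 𝔉̂_s`, i.e. `E[1_B (M_t - M_s)] = 0`. As `M_t = M_s` on
`{τ ≤ r}` for `r ≤ s`, the same holds on `B ∩ {τ > r}`, and these sets form a π-system
generating `ℱ_s`.
-/

noncomputable def uniformGrid (a b : ℝ) (n i : ℕ) : ℝ := a + i * ((b - a) / (n + 1))

noncomputable def stieltjesSum (f w : ℝ → ℝ) (a b : ℝ) (n : ℕ) : ℝ :=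
  ∑ i ∈ range (n + 1),
    (f (uniformGrid a b n (i + 1)) - f (uniformGrid a b n i)) * w (uniformGrid a b n (i + 1))

section RiemannStieltjes

variable {a b : ℝ} {n : ℕ}

@[simp] lemma uniformGrid_zero : uniformGrid a b n 0 = a := by simp [uniformGrid]

@[simp] lemma uniformGrid_last : uniformGrid a b n (n + 1) = b := by
  simp only [uniformGrid]
  push_cast
  field_simp
  ring

lemma uniformGrid_succ_sub (i : ℕ) :
    uniformGrid a b n (i + 1) - uniformGrid a b n i = (b - a) / (n + 1) := by
  simp only [uniformGrid]
  push_cast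
  ring

lemma uniformGrid_mono (hab : a ≤ b) : Monotone (uniformGrid a b n) := fun i j hij => by
  unfold uniformGrid
  gcongr

lemma uniformGrid_mem_Icc (hab : a ≤ b) {i : ℕ} (hi : i ≤ n + 1) :
    uniformGrid a b n i ∈ Set.Icc a b :=
  ⟨by simpa using uniformGrid_mono (b := b) (n := n) hab (Nat.zero_le i),
    by simpa using uniformGrid_mono (a := a) (b := b) (n := n) hab hi⟩

lemma eventually_abs_sub_le_of_abs_sub_le_mesh {f : ℝ → ℝ} (hf : ContinuousOn f (Set.Icc a b))
    {ε : ℝ} (hε : 0 < ε) :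
    ∀ᶠ n : ℕ in atTop, ∀ x ∈ Set.Icc a b, ∀ y ∈ Set.Icc a b,
      |x - y| ≤ (b - a) / (n + 1) → |f x - f y| ≤ ε := by
  obtain ⟨δ, hδ, hfδ⟩ := Metric.uniformContinuousOn_iff_le.1
    (isCompact_Icc.uniformContinuousOn_of_continuous hf) ε hε
  have hmesh : Tendsto (fun n : ℕ => (b - a) / ((n : ℝ) + 1)) atTop (𝓝 0) := by
    have := tendsto_one_div_add_atTop_nhds_zero_nat.const_mul (b - a)
    rw [mul_zero] at this
    exact this.congr fun n => mul_one_div _ _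
  filter_upwards [hmesh.eventually (ge_mem_nhds hδ)] with n hn x hx y hy hxy
  exact hfδ x hx y hy (hxy.trans hn)

lemma tendsto_of_le_of_forall_eventually_sub_le {u : ℕ → ℝ} {L C : ℝ} (hle : ∀ n, u n ≤ L)
    (h : ∀ ε > 0, ∀ᶠ n in atTop, L - u n ≤ ε * C) : Tendsto u atTop (𝓝 L) := by
  refine tendsto_order.2
    ⟨fun l hl => ?_, fun l hl => Eventually.of_forall fun n => (hle n).trans_lt hl⟩
  set ε := (L - l) / (|C| + 1)
  have hε : 0 < ε := div_pos (sub_pos.2 hl) (by positivity)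
  have hεC : ε * C < L - l := calc
    ε * C ≤ ε * |C| := mul_le_mul_of_nonneg_left (le_abs_self C) hε.le
    _ < ε * (|C| + 1) := by gcongr; linarith
    _ = L - l := div_mul_cancel₀ _ (by positivity)
  filter_upwards [h ε hε] with n hn
  linarith

variable {f w F : ℝ → ℝ}

lemma stieltjesSum_le (hab : a ≤ b)
    (hF : ∀ p ∈ Set.Icc a b, ∀ q ∈ Set.Icc a b, p ≤ q → (f q - f p) * w q ≤ F q - F p) (n : ℕ) :
    stieltjesSum f w a b n ≤ F b - F a := by
  calc stieltjesSum f w a b n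
      ≤ ∑ i ∈ range (n + 1), (F (uniformGrid a b n (i + 1)) - F (uniformGrid a b n i)) :=
        sum_le_sum fun i hi => by
          have hi : i + 1 ≤ n + 1 := by simpa using hi
          exact hF _ (uniformGrid_mem_Icc hab (by omega)) _ (uniformGrid_mem_Icc hab hi)
            (uniformGrid_mono hab (Nat.le_succ i))
    _ = F b - F a := by rw [sum_range_sub (fun i => F (uniformGrid a b n i))]; simp

lemma tendsto_stieltjesSum (hab : a ≤ b) (hf : ContinuousOn f (Set.Icc a b))
    (hw : AntitoneOn w (Set.Icc a b))
    (hF : ∀ p ∈ Set.Icc a b, ∀ q ∈ Set.Icc a b, p ≤ q →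
      (f q - f p) * w q ≤ F q - F p ∧ F q - F p ≤ (f q - f p) * w p) :
    Tendsto (stieltjesSum f w a b) atTop (𝓝 (F b - F a)) := by
  refine tendsto_of_le_of_forall_eventually_sub_le
    (stieltjesSum_le hab fun p hp q hq hpq => (hF p hp q hq hpq).1) (C := w a - w b)
    fun ε hε => ?_
  filter_upwards [eventually_abs_sub_le_of_abs_sub_le_mesh hf hε] with n hn
  set p := uniformGrid a b n
  have hmem : ∀ i ≤ n + 1, p i ∈ Set.Icc a b := fun i hi => uniformGrid_mem_Icc hab hi
  have hterm : ∀ i ∈ range (n + 1),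
      F (p (i + 1)) - F (p i) - (f (p (i + 1)) - f (p i)) * w (p (i + 1))
        ≤ ε * (w (p i) - w (p (i + 1))) := by
    intro i hi
    have hi : i + 1 ≤ n + 1 := by simpa using hi
    have hle : p i ≤ p (i + 1) := uniformGrid_mono hab (Nat.le_succ i)
    have hgap : |p (i + 1) - p i| ≤ (b - a) / (n + 1) := by
      rw [abs_of_nonneg (sub_nonneg.2 hle), uniformGrid_succ_sub]
    have hosc : |f (p (i + 1)) - f (p i)| ≤ ε := hn _ (hmem _ hi) _ (hmem _ (by omega)) hgap
    have hwd : 0 ≤ w (p i) - w (p (i + 1)) :=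
      sub_nonneg.2 (hw (hmem _ (by omega)) (hmem _ hi) hle)
    calc _ ≤ (f (p (i + 1)) - f (p i)) * (w (p i) - w (p (i + 1))) := by
          linarith [(hF _ (hmem _ (by omega)) _ (hmem _ hi) hle).2]
      _ ≤ ε * (w (p i) - w (p (i + 1))) :=
          mul_le_mul_of_nonneg_right ((le_abs_self _).trans hosc) hwd
  have htel := sum_le_sum hterm
  rw [sum_sub_distrib, sum_range_sub (fun i => F (p i)), ← mul_sum,
    sum_range_sub' (fun i => w (p i))] at htel
  simpa [stieltjesSum, p] using htel

lemma antitoneOn_ite_lt (s : Set ℝ) (c : ℝ) :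
    AntitoneOn (fun u : ℝ => if u < c then (1 : ℝ) else 0) s := fun x _ y _ hxy => by
  by_cases hy : y < c
  · simp [hy, hxy.trans_lt hy]
  · by_cases hx : x < c <;> simp [hx, hy]

lemma increment_min_bounds (hf : MonotoneOn f (Set.Icc a b)) (c : ℝ) {p q : ℝ}
    (hp : p ∈ Set.Icc a b) (hq : q ∈ Set.Icc a b) (hpq : p ≤ q) :
    (f q - f p) * (if q < c then 1 else 0) ≤ f (min q c) - f (min p c) ∧
      f (min q c) - f (min p c) ≤ (f q - f p) * (if p < c then 1 else 0) := by
  rcases lt_or_ge q c with hqc | hcq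
  · simp [hqc, hpq.trans_lt hqc, min_eq_left hqc.le, min_eq_left (hpq.trans hqc.le)]
  rcases lt_or_ge p c with hpc | hcp
  · have hc : c ∈ Set.Icc a b := ⟨hp.1.trans hpc.le, hcq.trans hq.2⟩
    simp only [hpc, hcq.not_gt, if_true, if_false, mul_zero, mul_one, min_eq_right hcq,
      min_eq_left hpc.le, sub_nonneg]
    exact ⟨hf hp hc hpc.le, sub_le_sub_right (hf hc hq hcq) _⟩
  · simp [hcq.not_gt, hcp.not_gt, min_eq_right hcq, min_eq_right hcp]

lemma stieltjesSum_ite_lt_le (hab : a ≤ b) (hf : MonotoneOn f (Set.Icc a b)) (c : ℝ) (n : ℕ) :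
    stieltjesSum f (fun u => if u < c then 1 else 0) a b n ≤ f (min b c) - f (min a c) :=
  stieltjesSum_le (F := fun u => f (min u c)) hab
    (fun _ hp _ hq hpq => (increment_min_bounds hf c hp hq hpq).1) n

lemma tendsto_stieltjesSum_ite_lt (hab : a ≤ b) (hf : MonotoneOn f (Set.Icc a b))
    (hfc : ContinuousOn f (Set.Icc a b)) (c : ℝ) :
    Tendsto (stieltjesSum f (fun u => if u < c then 1 else 0) a b) atTop
      (𝓝 (f (min b c) - f (min a c))) :=
  tendsto_stieltjesSum (F := fun u => f (min u c)) hab hfc (antitoneOn_ite_lt _ c)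
    fun _ hp _ hq hpq => increment_min_bounds hf c hp hq hpq

lemma exp_neg_sub_exp_neg_bounds (x y : ℝ) :
    (y - x) * Real.exp (-y) ≤ Real.exp (-x) - Real.exp (-y) ∧
      Real.exp (-x) - Real.exp (-y) ≤ (y - x) * Real.exp (-x) := by
  have h₁ : Real.exp (y - x) * Real.exp (-y) = Real.exp (-x) := by rw [← Real.exp_add]; ring_nf
  have h₂ : Real.exp (x - y) * Real.exp (-x) = Real.exp (-y) := by rw [← Real.exp_add]; ring_nf
  constructor
  · nlinarith [Real.add_one_le_exp (y - x), Real.exp_pos (-y)]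
  · nlinarith [Real.add_one_le_exp (x - y), Real.exp_pos (-x)]

lemma stieltjesSum_exp_neg_le (hab : a ≤ b) (n : ℕ) :
    stieltjesSum f (fun u => Real.exp (-f u)) a b n ≤ Real.exp (-f a) - Real.exp (-f b) := by
  have := stieltjesSum_le (f := f) (F := fun u => -Real.exp (-f u))
    (w := fun u => Real.exp (-f u)) hab
    (fun p _ q _ _ => by linarith [(exp_neg_sub_exp_neg_bounds (f p) (f q)).1]) n
  linarith

lemma tendsto_stieltjesSum_exp_neg (hab : a ≤ b) (hf : MonotoneOn f (Set.Icc a b))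
    (hfc : ContinuousOn f (Set.Icc a b)) :
    Tendsto (stieltjesSum f (fun u => Real.exp (-f u)) a b) atTop
      (𝓝 (Real.exp (-f a) - Real.exp (-f b))) := by
  have hw : AntitoneOn (fun u => Real.exp (-f u)) (Set.Icc a b) := fun p hp q hq hpq =>
    Real.exp_le_exp.2 (neg_le_neg (hf hp hq hpq))
  convert tendsto_stieltjesSum (F := fun u => -Real.exp (-f u)) hab hfc hw
    (fun p _ q _ _ => by
      constructor <;> linarith [exp_neg_sub_exp_neg_bounds (f p) (f q)]) using 2
  ring

lemma measurable_stieltjesSum {Ω : Type*} {m : MeasurableSpace Ω} {Λ W : ℝ → Ω → ℝ}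
    (hab : a ≤ b) (hΛ : ∀ u ∈ Set.Icc a b, Measurable[m] (Λ u))
    (hW : ∀ u ∈ Set.Icc a b, Measurable[m] (W u)) (n : ℕ) :
    Measurable[m] fun ω => stieltjesSum (Λ · ω) (W · ω) a b n := by
  refine Finset.measurable_sum _ fun i hi => ?_
  have hi : i + 1 ≤ n + 1 := by simpa using hi
  exact ((hΛ _ (uniformGrid_mem_Icc hab hi)).sub (hΛ _ (uniformGrid_mem_Icc hab (by omega)))).mul
    (hW _ (uniformGrid_mem_Icc hab hi))

end RiemannStieltjes

section MeasureTheory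

variable {α : Type*} {m m0 : MeasurableSpace α} {μ : Measure α}

lemma lintegral_mul_eq_of_forall_setLIntegral_eq (hm : m ≤ m0) {f g X : α → ℝ≥0∞}
    (hf : Measurable f) (hg : Measurable g)
    (hfg : ∀ s, MeasurableSet[m] s → ∫⁻ x in s, f x ∂μ = ∫⁻ x in s, g x ∂μ)
    (hX : Measurable[m] X) :
    ∫⁻ x, f x * X x ∂μ = ∫⁻ x, g x * X x ∂μ := by
  have htrim : (μ.withDensity f).trim hm = (μ.withDensity g).trim hm := by
    refine @Measure.ext _ m _ _ fun s hs => ?_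
    rw [trim_measurableSet_eq hm hs, trim_measurableSet_eq hm hs,
      withDensity_apply _ (hm s hs), withDensity_apply _ (hm s hs), hfg s hs]
  have hX0 : Measurable X := hX.mono hm le_rfl
  calc ∫⁻ x, f x * X x ∂μ = ∫⁻ x, X x ∂(μ.withDensity f).trim hm := by
        rw [lintegral_trim hm hX, lintegral_withDensity_eq_lintegral_mul _ hf hX0]; rfl
    _ = ∫⁻ x, g x * X x ∂μ := by
        rw [htrim, lintegral_trim hm hX, lintegral_withDensity_eq_lintegral_mul _ hg hX0]; rfl

lemma tendsto_lintegral_of_tendsto_of_le {f : ℕ → α → ℝ≥0∞} {F : α → ℝ≥0∞}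
    (hf : ∀ n, AEMeasurable (f n) μ) (hle : ∀ n x, f n x ≤ F x)
    (hlim : ∀ x, Tendsto (fun n => f n x) atTop (𝓝 (F x))) :
    Tendsto (fun n => ∫⁻ x, f n x ∂μ) atTop (𝓝 (∫⁻ x, F x ∂μ)) := by
  refine tendsto_of_le_liminf_of_limsup_le ?_ ?_
  · calc ∫⁻ x, F x ∂μ = ∫⁻ x, liminf (fun n => f n x) atTop ∂μ :=
          lintegral_congr fun x => (hlim x).liminf_eq.symm
      _ ≤ _ := lintegral_liminf_le' hf
  · exact limsup_le_of_le (by isBoundedDefault)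
      (Eventually.of_forall fun n => lintegral_mono (hle n))

lemma setIntegral_eq_of_isPiSystem {E : Type*} [NormedAddCommGroup E] [NormedSpace ℝ E]
    (hm : m ≤ m0) {f g : α → E} (hf : Integrable f μ) (hg : Integrable g μ)
    {S : Set (Set α)} (hgen : m = MeasurableSpace.generateFrom S) (hS : IsPiSystem S)
    (hbasic : ∀ s ∈ S, ∫ x in s, f x ∂μ = ∫ x in s, g x ∂μ)
    (huniv : ∫ x, f x ∂μ = ∫ x, g x ∂μ) {s : Set α} (hs : MeasurableSet[m] s) :
    ∫ x in s, f x ∂μ = ∫ x in s, g x ∂μ := by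
  refine MeasurableSpace.induction_on_inter
    (C := fun s _ => ∫ x in s, f x ∂μ = ∫ x in s, g x ∂μ) hgen hS (by simp) hbasic
    (fun s hs hfg => ?_) (fun s hdisj hs hfg => ?_) s hs
  · have h₁ := integral_add_compl (hm s hs) hf
    have h₂ := integral_add_compl (hm s hs) hg
    rw [hfg, huniv] at h₁
    exact add_left_cancel (h₁.trans h₂.symm)
  · have hs' : ∀ i, MeasurableSet (s i) := fun i => hm _ (hs i)
    rw [integral_iUnion hs' hdisj hf.integrableOn, integral_iUnion hs' hdisj hg.integrableOn]
    exact tsum_congr hfg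

end MeasureTheory

noncomputable def compensatedDefault {Ω : Type*} (τ : Ω → ℝ) (Λ : ℝ → Ω → ℝ) (t : ℝ) (ω : Ω) :
    ℝ :=
  Set.indicator {ω' | τ ω' ≤ t} (fun _ => (1 : ℝ)) ω - Λ (min t (τ ω)) ω

abbrev progressiveEnlargement {Ω : Type*} {m0 : MeasurableSpace Ω} (𝔉 : Filtration ℝ m0)
    (τ : Ω → ℝ) (s : ℝ) : MeasurableSpace Ω :=
  𝔉 s ⊔ MeasurableSpace.generateFrom {A | ∃ r : ℝ, 0 ≤ r ∧ r ≤ s ∧ A = {ω | r < τ ω}}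

def progressiveGenerators {Ω : Type*} {m0 : MeasurableSpace Ω} (𝔉 : Filtration ℝ m0)
    (τ : Ω → ℝ) (s : ℝ) : Set (Set Ω) :=
  {A | ∃ B r, MeasurableSet[𝔉 s] B ∧ r ≤ s ∧ A = B ∩ {ω | r < τ ω}}

section Hazard

variable {Ω : Type*} {m0 : MeasurableSpace Ω} {μ : Measure Ω} {𝔉 : Filtration ℝ m0}
  {τ : Ω → ℝ} {Λ : ℝ → Ω → ℝ}

lemma measurable_stopped {m : MeasurableSpace Ω} (hτnn : ∀ ω, 0 ≤ τ ω) {t : ℝ} (ht : 0 ≤ t)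
    (hΛ : ∀ u ∈ Set.Icc 0 t, Measurable[m] (Λ u))
    (hτ : ∀ u ∈ Set.Icc 0 t, MeasurableSet[m] {ω | u < τ ω})
    (hmono : ∀ ω, MonotoneOn (Λ · ω) (Set.Ici 0))
    (hcont : ∀ ω, ContinuousOn (Λ · ω) (Set.Ici 0)) :
    Measurable[m] fun ω => Λ (min t (τ ω)) ω := by
  have hlim : ∀ ω, Tendsto (fun n => Λ 0 ω +
      stieltjesSum (Λ · ω) (fun u => if u < τ ω then 1 else 0) 0 t n) atTop
      (𝓝 (Λ (min t (τ ω)) ω)) := fun ω => by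
    have := (tendsto_stieltjesSum_ite_lt ht ((hmono ω).mono Set.Icc_subset_Ici_self)
      ((hcont ω).mono Set.Icc_subset_Ici_self) (τ ω)).const_add (Λ 0 ω)
    rwa [min_eq_left (hτnn ω), add_sub_cancel] at this
  exact measurable_of_tendsto_metrizable (fun n => (hΛ 0 ⟨le_rfl, ht⟩).add
    (measurable_stieltjesSum (W := fun u ω => if u < τ ω then 1 else 0) ht hΛ
      (fun u hu => Measurable.ite (hτ u hu) measurable_const measurable_const) n))
    (tendsto_pi_nhds.2 hlim)

lemma integrable_exp_neg_of_condExp_eq {u : ℝ}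
    (hsurv : μ[{ω | u < τ ω}.indicator (fun _ => (1 : ℝ)) | 𝔉 u] =ᵐ[μ]
      fun ω => Real.exp (-Λ u ω)) :
    Integrable (fun ω => Real.exp (-Λ u ω)) μ :=
  integrable_condExp.congr hsurv

lemma integrable_ite_lt [IsFiniteMeasure μ] (hτ : Measurable τ) (u : ℝ) :
    Integrable (fun ω => if u < τ ω then (1 : ℝ) else 0) μ :=
  Integrable.of_bound (Measurable.ite (measurableSet_lt measurable_const hτ) measurable_const
    measurable_const).aestronglyMeasurable 1 (Eventually.of_forall fun ω => by split_ifs <;> simp)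

lemma setIntegral_ite_lt_eq [IsFiniteMeasure μ] (hτ : Measurable τ) {u : ℝ}
    (hsurv : μ[{ω | u < τ ω}.indicator (fun _ => (1 : ℝ)) | 𝔉 u] =ᵐ[μ]
      fun ω => Real.exp (-Λ u ω))
    {A : Set Ω} (hA : MeasurableSet[𝔉 u] A) :
    ∫ ω in A, (if u < τ ω then 1 else 0) ∂μ = ∫ ω in A, Real.exp (-Λ u ω) ∂μ := by
  have hind : (fun ω => if u < τ ω then (1 : ℝ) else 0) =
      {ω | u < τ ω}.indicator (fun _ => (1 : ℝ)) := by
    ext ω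
    simp [Set.indicator_apply]
  rw [hind, ← setIntegral_condExp (𝔉.le u)
    ((integrable_const 1).indicator (measurableSet_lt measurable_const hτ)) hA]
  exact integral_congr_ae (ae_restrict_of_ae hsurv)

lemma setLIntegral_ite_lt_mul_eq [IsFiniteMeasure μ] (hτ : Measurable τ) {u : ℝ}
    (hΛ : Measurable[𝔉 u] (Λ u))
    (hsurv : μ[{ω | u < τ ω}.indicator (fun _ => (1 : ℝ)) | 𝔉 u] =ᵐ[μ]
      fun ω => Real.exp (-Λ u ω))
    {X : Ω → ℝ≥0∞} (hX : Measurable[𝔉 u] X) {A : Set Ω} (hA : MeasurableSet[𝔉 u] A) :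
    ∫⁻ ω in A, ENNReal.ofReal (if u < τ ω then 1 else 0) * X ω ∂μ =
      ∫⁻ ω in A, ENNReal.ofReal (Real.exp (-Λ u ω)) * X ω ∂μ := by
  have hset : MeasurableSet {ω | u < τ ω} := measurableSet_lt measurable_const hτ
  refine lintegral_mul_eq_of_forall_setLIntegral_eq (𝔉.le u)
    (Measurable.ite hset measurable_const measurable_const).ennreal_ofReal
    (hΛ.mono (𝔉.le u) le_rfl).neg.exp.ennreal_ofReal (fun s hs => ?_) hX
  rw [Measure.restrict_restrict (𝔉.le u s hs),
    ← ofReal_integral_eq_lintegral_ofReal (integrable_ite_lt hτ u).integrableOn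
      (Eventually.of_forall fun ω => by simp only [Pi.zero_apply]; split_ifs <;> simp),
    ← ofReal_integral_eq_lintegral_ofReal
      (integrable_exp_neg_of_condExp_eq hsurv).integrableOn
      (Eventually.of_forall fun ω => (Real.exp_pos _).le),
    setIntegral_ite_lt_eq hτ hsurv (hs.inter hA)]

lemma setLIntegral_ofReal_stieltjesSum_ite_lt_eq [IsFiniteMeasure μ] (hτ : Measurable τ)
    (hΛ : ∀ u, 0 ≤ u → Measurable[𝔉 u] (Λ u))
    (hmono : ∀ ω, MonotoneOn (Λ · ω) (Set.Ici 0))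
    (hsurv : ∀ u, 0 ≤ u → μ[{ω | u < τ ω}.indicator (fun _ => (1 : ℝ)) | 𝔉 u] =ᵐ[μ]
      fun ω => Real.exp (-Λ u ω))
    {s t : ℝ} (hs : 0 ≤ s) (hst : s ≤ t) {B : Set Ω} (hB : MeasurableSet[𝔉 s] B) (n : ℕ) :
    ∫⁻ ω in B, ENNReal.ofReal
        (stieltjesSum (Λ · ω) (fun u => if u < τ ω then 1 else 0) s t n) ∂μ =
      ∫⁻ ω in B, ENNReal.ofReal (stieltjesSum (Λ · ω) (fun u => Real.exp (-Λ u ω)) s t n) ∂μ := by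
  set p := uniformGrid s t n
  have hp : ∀ i ≤ n + 1, p i ∈ Set.Icc s t := fun i hi => uniformGrid_mem_Icc hst hi
  have hp0 : ∀ i ≤ n + 1, 0 ≤ p i := fun i hi => hs.trans (hp i hi).1
  have hinc : ∀ i ∈ range (n + 1), ∀ ω, 0 ≤ Λ (p (i + 1)) ω - Λ (p i) ω := fun i hi ω => by
    have hi : i + 1 ≤ n + 1 := by simpa using hi
    exact sub_nonneg.2 (hmono ω (hp0 i (by omega)) (hp0 _ hi)
      (uniformGrid_mono hst (Nat.le_succ i)))
  have hsplit : ∀ W : ℝ → Ω → ℝ, (∀ u ω, 0 ≤ W u ω) → ∀ ω,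
      ENNReal.ofReal (stieltjesSum (Λ · ω) (W · ω) s t n) = ∑ i ∈ range (n + 1),
        ENNReal.ofReal (W (p (i + 1)) ω) * ENNReal.ofReal (Λ (p (i + 1)) ω - Λ (p i) ω) :=
    fun W hW ω => by
      rw [stieltjesSum, ENNReal.ofReal_sum_of_nonneg fun i hi => mul_nonneg (hinc i hi ω) (hW _ _)]
      refine sum_congr rfl fun i hi => ?_
      rw [mul_comm, ENNReal.ofReal_mul (hW _ _)]
  have hmeas : ∀ i ∈ range (n + 1),
      Measurable[𝔉 (p (i + 1))] fun ω => ENNReal.ofReal (Λ (p (i + 1)) ω - Λ (p i) ω) :=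
    fun i hi => by
      have hi : i + 1 ≤ n + 1 := by simpa using hi
      exact ((hΛ _ (hp0 _ hi)).sub ((hΛ _ (hp0 i (by omega))).mono
        (𝔉.mono (uniformGrid_mono hst (Nat.le_succ i))) le_rfl)).ennreal_ofReal
  rw [lintegral_congr (hsplit (fun u ω => if u < τ ω then 1 else 0)
      fun u ω => by split_ifs <;> simp),
    lintegral_congr (hsplit (fun u ω => Real.exp (-Λ u ω)) fun u ω => (Real.exp_pos _).le),
    lintegral_finsetSum, lintegral_finsetSum]
  · refine sum_congr rfl fun i hi => ?_
    have hi' : i + 1 ≤ n + 1 := by simpa using hi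
    exact setLIntegral_ite_lt_mul_eq hτ (hΛ _ (hp0 _ hi')) (hsurv _ (hp0 _ hi')) (hmeas i hi)
      (𝔉.mono (hp _ hi').1 _ hB)
  · exact fun i hi => (((hΛ _ (hp0 _ (by simpa using hi))).mono (𝔉.le _) le_rfl).neg.exp
      |>.ennreal_ofReal).mul ((hmeas i hi).mono (𝔉.le _) le_rfl)
  · exact fun i hi => (Measurable.ite (measurableSet_lt measurable_const hτ) measurable_const
      measurable_const).ennreal_ofReal.mul ((hmeas i hi).mono (𝔉.le _) le_rfl)

lemma setLIntegral_ofReal_stopped_sub_eq [IsFiniteMeasure μ] (hτ : Measurable τ)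
    (hΛ : ∀ u, 0 ≤ u → Measurable[𝔉 u] (Λ u))
    (hmono : ∀ ω, MonotoneOn (Λ · ω) (Set.Ici 0))
    (hcont : ∀ ω, ContinuousOn (Λ · ω) (Set.Ici 0))
    (hsurv : ∀ u, 0 ≤ u → μ[{ω | u < τ ω}.indicator (fun _ => (1 : ℝ)) | 𝔉 u] =ᵐ[μ]
      fun ω => Real.exp (-Λ u ω))
    {s t : ℝ} (hs : 0 ≤ s) (hst : s ≤ t) {B : Set Ω} (hB : MeasurableSet[𝔉 s] B) :
    ∫⁻ ω in B, ENNReal.ofReal (Λ (min t (τ ω)) ω - Λ (min s (τ ω)) ω) ∂μ =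
      ∫⁻ ω in B, ENNReal.ofReal (Real.exp (-Λ s ω) - Real.exp (-Λ t ω)) ∂μ := by
  have hIcc : Set.Icc s t ⊆ Set.Ici 0 := fun u hu => hs.trans hu.1
  have hΛm : ∀ u ∈ Set.Icc s t, Measurable (Λ u) := fun u hu =>
    (hΛ u (hIcc hu)).mono (𝔉.le u) le_rfl
  have hind := tendsto_lintegral_of_tendsto_of_le (μ := μ.restrict B)
    (fun n => (measurable_stieltjesSum (W := fun u ω => if u < τ ω then 1 else 0) hst hΛm
      (fun u _ => Measurable.ite (measurableSet_lt measurable_const hτ) measurable_const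
        measurable_const) n).ennreal_ofReal.aemeasurable)
    (fun n ω => ENNReal.ofReal_le_ofReal (stieltjesSum_ite_lt_le hst ((hmono ω).mono hIcc) _ n))
    (fun ω => (ENNReal.continuous_ofReal.tendsto _).comp
      (tendsto_stieltjesSum_ite_lt hst ((hmono ω).mono hIcc) ((hcont ω).mono hIcc) (τ ω)))
  have hexp := tendsto_lintegral_of_tendsto_of_le (μ := μ.restrict B)
    (fun n => (measurable_stieltjesSum (W := fun u ω => Real.exp (-Λ u ω)) hst hΛm
      (fun u hu => (hΛm u hu).neg.exp) n).ennreal_ofReal.aemeasurable)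
    (fun n ω => ENNReal.ofReal_le_ofReal (stieltjesSum_exp_neg_le hst n))
    (fun ω => (ENNReal.continuous_ofReal.tendsto _).comp
      (tendsto_stieltjesSum_exp_neg hst ((hmono ω).mono hIcc) ((hcont ω).mono hIcc)))
  simp only [setLIntegral_ofReal_stieltjesSum_ite_lt_eq hτ hΛ hmono hsurv hs hst hB] at hind
  exact tendsto_nhds_unique hind hexp

lemma measurable_stopped_of_adapted (hτ : Measurable τ) (hτnn : ∀ ω, 0 ≤ τ ω)
    (hΛ : ∀ u, 0 ≤ u → Measurable[𝔉 u] (Λ u))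
    (hmono : ∀ ω, MonotoneOn (Λ · ω) (Set.Ici 0))
    (hcont : ∀ ω, ContinuousOn (Λ · ω) (Set.Ici 0)) {t : ℝ} (ht : 0 ≤ t) :
    Measurable fun ω => Λ (min t (τ ω)) ω :=
  measurable_stopped hτnn ht (fun u hu => (hΛ u hu.1).mono (𝔉.le u) le_rfl)
    (fun _ _ => measurableSet_lt measurable_const hτ) hmono hcont

lemma integrable_stopped [IsFiniteMeasure μ] (hτ : Measurable τ) (hτnn : ∀ ω, 0 ≤ τ ω)
    (hΛ : ∀ u, 0 ≤ u → Measurable[𝔉 u] (Λ u)) (hΛ0 : ∀ ω, Λ 0 ω = 0)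
    (hmono : ∀ ω, MonotoneOn (Λ · ω) (Set.Ici 0))
    (hcont : ∀ ω, ContinuousOn (Λ · ω) (Set.Ici 0))
    (hsurv : ∀ u, 0 ≤ u → μ[{ω | u < τ ω}.indicator (fun _ => (1 : ℝ)) | 𝔉 u] =ᵐ[μ]
      fun ω => Real.exp (-Λ u ω))
    {t : ℝ} (ht : 0 ≤ t) :
    Integrable (fun ω => Λ (min t (τ ω)) ω) μ := by
  have hmin0 : ∀ ω, Λ (min 0 (τ ω)) ω = 0 := fun ω => by rw [min_eq_left (hτnn ω), hΛ0]
  have hnn : ∀ ω, 0 ≤ Λ (min t (τ ω)) ω := fun ω => by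
    have h0 : (0 : ℝ) ≤ min t (τ ω) := le_min ht (hτnn ω)
    simpa [hΛ0] using hmono ω (Set.mem_Ici.2 le_rfl) h0 h0
  refine ⟨(measurable_stopped_of_adapted hτ hτnn hΛ hmono hcont ht).aestronglyMeasurable, ?_⟩
  rw [hasFiniteIntegral_iff_ofReal (Eventually.of_forall hnn)]
  have key := setLIntegral_ofReal_stopped_sub_eq hτ hΛ hmono hcont hsurv le_rfl ht
    (B := Set.univ) MeasurableSet.univ
  simp only [Measure.restrict_univ, hmin0, sub_zero, hΛ0, neg_zero, Real.exp_zero] at key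
  rw [key]
  calc ∫⁻ ω, ENNReal.ofReal (1 - Real.exp (-Λ t ω)) ∂μ ≤ ∫⁻ _, 1 ∂μ :=
        lintegral_mono fun ω => ENNReal.ofReal_le_one.2 (by linarith [Real.exp_pos (-Λ t ω)])
    _ < ⊤ := by simp

lemma progressiveEnlargement_le (hτ : Measurable τ) (s : ℝ) :
    progressiveEnlargement 𝔉 τ s ≤ m0 :=
  sup_le (𝔉.le s) (MeasurableSpace.generateFrom_le fun _ ⟨_, _, _, hA⟩ =>
    hA ▸ measurableSet_lt measurable_const hτ)

lemma measurableSet_lt_progressiveEnlargement {r s : ℝ} (hr : 0 ≤ r) (hrs : r ≤ s) :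
    MeasurableSet[progressiveEnlargement 𝔉 τ s] {ω | r < τ ω} :=
  le_sup_right (a := 𝔉 s) _ (MeasurableSpace.measurableSet_generateFrom ⟨r, hr, hrs, rfl⟩)

lemma isPiSystem_progressiveGenerators (s : ℝ) : IsPiSystem (progressiveGenerators 𝔉 τ s) := by
  rintro _ ⟨B₁, r₁, hB₁, hr₁, rfl⟩ _ ⟨B₂, r₂, hB₂, hr₂, rfl⟩ -
  refine ⟨B₁ ∩ B₂, max r₁ r₂, hB₁.inter hB₂, max_le hr₁ hr₂, ?_⟩
  ext ω
  simp only [Set.mem_inter_iff, Set.mem_ofPred_eq, max_lt_iff]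
  tauto

lemma setOf_lt_eq_univ_of_neg (hτnn : ∀ ω, 0 ≤ τ ω) {r : ℝ} (hr : r < 0) :
    {ω | r < τ ω} = Set.univ :=
  Set.eq_univ_of_forall fun ω => hr.trans_le (hτnn ω)

lemma progressiveEnlargement_eq_generateFrom (hτnn : ∀ ω, 0 ≤ τ ω) (s : ℝ) :
    progressiveEnlargement 𝔉 τ s =
      MeasurableSpace.generateFrom (progressiveGenerators 𝔉 τ s) := by
  refine le_antisymm (sup_le (fun B hB => ?_) (MeasurableSpace.generateFrom_le ?_))
    (MeasurableSpace.generateFrom_le ?_)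
  · refine MeasurableSpace.measurableSet_generateFrom ⟨B, min s (-1), hB, min_le_left _ _, ?_⟩
    rw [setOf_lt_eq_univ_of_neg hτnn ((min_le_right s (-1)).trans_lt (by norm_num)),
      Set.inter_univ]
  · rintro _ ⟨r, -, hrs, rfl⟩
    exact MeasurableSpace.measurableSet_generateFrom
      ⟨Set.univ, r, MeasurableSet.univ, hrs, (Set.univ_inter _).symm⟩
  · rintro _ ⟨B, r, hB, hrs, rfl⟩
    refine (le_sup_left (a := 𝔉 s) _ hB).inter ?_
    rcases le_or_gt 0 r with hr | hr
    · exact measurableSet_lt_progressiveEnlargement hr hrs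
    · rw [setOf_lt_eq_univ_of_neg hτnn hr]
      exact MeasurableSet.univ

lemma compensatedDefault_sub (s t : ℝ) (ω : Ω) :
    compensatedDefault τ Λ t ω - compensatedDefault τ Λ s ω =
      ((if s < τ ω then 1 else 0) - (if t < τ ω then 1 else 0)) -
        (Λ (min t (τ ω)) ω - Λ (min s (τ ω)) ω) := by
  simp only [compensatedDefault, Set.indicator_apply, Set.mem_ofPred_eq]
  split_ifs <;> linarith

lemma compensatedDefault_eq_of_le {s t : ℝ} {ω : Ω} (hτs : τ ω ≤ s) (hst : s ≤ t) :
    compensatedDefault τ Λ t ω = compensatedDefault τ Λ s ω := by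
  simp [compensatedDefault, hτs, hτs.trans hst]

lemma stronglyMeasurable_compensatedDefault (hτnn : ∀ ω, 0 ≤ τ ω)
    (hΛ : ∀ u, 0 ≤ u → Measurable[𝔉 u] (Λ u))
    (hmono : ∀ ω, MonotoneOn (Λ · ω) (Set.Ici 0))
    (hcont : ∀ ω, ContinuousOn (Λ · ω) (Set.Ici 0)) {t : ℝ} (ht : 0 ≤ t) :
    StronglyMeasurable[progressiveEnlargement 𝔉 τ t] (compensatedDefault τ Λ t) := by
  have hdefault : MeasurableSet[progressiveEnlargement 𝔉 τ t] {ω | τ ω ≤ t} := by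
    simpa only [Set.compl_ofPred, not_lt] using
      (measurableSet_lt_progressiveEnlargement (𝔉 := 𝔉) ht le_rfl).compl
  refine (Measurable.sub (measurable_const.indicator hdefault) (measurable_stopped hτnn ht
    (fun u hu => (hΛ u hu.1).mono ((𝔉.mono hu.2).trans le_sup_left) le_rfl)
    (fun u hu => measurableSet_lt_progressiveEnlargement hu.1 hu.2) hmono hcont)).stronglyMeasurable

lemma integrable_compensatedDefault [IsFiniteMeasure μ] (hτ : Measurable τ)
    (hτnn : ∀ ω, 0 ≤ τ ω)
    (hΛ : ∀ u, 0 ≤ u → Measurable[𝔉 u] (Λ u)) (hΛ0 : ∀ ω, Λ 0 ω = 0)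
    (hmono : ∀ ω, MonotoneOn (Λ · ω) (Set.Ici 0))
    (hcont : ∀ ω, ContinuousOn (Λ · ω) (Set.Ici 0))
    (hsurv : ∀ u, 0 ≤ u → μ[{ω | u < τ ω}.indicator (fun _ => (1 : ℝ)) | 𝔉 u] =ᵐ[μ]
      fun ω => Real.exp (-Λ u ω))
    {t : ℝ} (ht : 0 ≤ t) :
    Integrable (compensatedDefault τ Λ t) μ :=
  ((integrable_const 1).indicator (measurableSet_le hτ measurable_const)).sub
    (integrable_stopped hτ hτnn hΛ hΛ0 hmono hcont hsurv ht)

lemma setIntegral_stopped_sub_eq [IsFiniteMeasure μ] (hτ : Measurable τ)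
    (hτnn : ∀ ω, 0 ≤ τ ω)
    (hΛ : ∀ u, 0 ≤ u → Measurable[𝔉 u] (Λ u))
    (hmono : ∀ ω, MonotoneOn (Λ · ω) (Set.Ici 0))
    (hcont : ∀ ω, ContinuousOn (Λ · ω) (Set.Ici 0))
    (hsurv : ∀ u, 0 ≤ u → μ[{ω | u < τ ω}.indicator (fun _ => (1 : ℝ)) | 𝔉 u] =ᵐ[μ]
      fun ω => Real.exp (-Λ u ω))
    {s t : ℝ} (hs : 0 ≤ s) (hst : s ≤ t) {B : Set Ω} (hB : MeasurableSet[𝔉 s] B) :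
    ∫ ω in B, (Λ (min t (τ ω)) ω - Λ (min s (τ ω)) ω) ∂μ =
      ∫ ω in B, (Real.exp (-Λ s ω) - Real.exp (-Λ t ω)) ∂μ := by
  have ht := hs.trans hst
  have hΛm : ∀ u, 0 ≤ u → Measurable (Λ u) := fun u hu => (hΛ u hu).mono (𝔉.le u) le_rfl
  have hmin : ∀ ω, min s (τ ω) ≤ min t (τ ω) := fun ω => min_le_min_right _ hst
  rw [integral_eq_lintegral_of_nonneg_ae
      (Eventually.of_forall fun ω => sub_nonneg.2 (hmono ω (le_min hs (hτnn ω))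
        (le_min ht (hτnn ω)) (hmin ω)))
      ((measurable_stopped_of_adapted hτ hτnn hΛ hmono hcont ht).sub
        (measurable_stopped_of_adapted hτ hτnn hΛ hmono hcont hs)).aestronglyMeasurable,
    integral_eq_lintegral_of_nonneg_ae
      (Eventually.of_forall fun ω => sub_nonneg.2 (Real.exp_le_exp.2
        (neg_le_neg (hmono ω hs ht hst))))
      ((hΛm s hs).neg.exp.sub (hΛm t ht).neg.exp).aestronglyMeasurable,
    setLIntegral_ofReal_stopped_sub_eq hτ hΛ hmono hcont hsurv hs hst hB]

lemma setIntegral_compensatedDefault_eq [IsFiniteMeasure μ] (hτ : Measurable τ)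
    (hτnn : ∀ ω, 0 ≤ τ ω)
    (hΛ : ∀ u, 0 ≤ u → Measurable[𝔉 u] (Λ u)) (hΛ0 : ∀ ω, Λ 0 ω = 0)
    (hmono : ∀ ω, MonotoneOn (Λ · ω) (Set.Ici 0))
    (hcont : ∀ ω, ContinuousOn (Λ · ω) (Set.Ici 0))
    (hsurv : ∀ u, 0 ≤ u → μ[{ω | u < τ ω}.indicator (fun _ => (1 : ℝ)) | 𝔉 u] =ᵐ[μ]
      fun ω => Real.exp (-Λ u ω))
    {s t : ℝ} (hs : 0 ≤ s) (hst : s ≤ t) {B : Set Ω} (hB : MeasurableSet[𝔉 s] B) :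
    ∫ ω in B, compensatedDefault τ Λ t ω ∂μ = ∫ ω in B, compensatedDefault τ Λ s ω ∂μ := by
  have ht := hs.trans hst
  have hite := integrable_ite_lt (μ := μ) hτ
  have hexp : ∀ u, 0 ≤ u → Integrable (fun ω => Real.exp (-Λ u ω)) μ := fun u hu =>
    integrable_exp_neg_of_condExp_eq (hsurv u hu)
  have hstop := fun u (hu : 0 ≤ u) =>
    integrable_stopped hτ hτnn hΛ hΛ0 hmono hcont hsurv (t := u) hu
  have hjump :
      Integrable (fun ω => (if s < τ ω then (1 : ℝ) else 0) - if t < τ ω then 1 else 0) μ :=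
    (hite s).sub (hite t)
  have hcomp : Integrable (fun ω => Λ (min t (τ ω)) ω - Λ (min s (τ ω)) ω) μ :=
    (hstop t ht).sub (hstop s hs)
  have hsurvival : ∫ ω in B, ((if s < τ ω then 1 else 0) - if t < τ ω then 1 else 0) ∂μ =
      ∫ ω in B, (Real.exp (-Λ s ω) - Real.exp (-Λ t ω)) ∂μ := by
    rw [integral_sub (hite s).integrableOn (hite t).integrableOn,
      integral_sub (hexp s hs).integrableOn (hexp t ht).integrableOn,
      setIntegral_ite_lt_eq hτ (hsurv s hs) hB,
      setIntegral_ite_lt_eq hτ (hsurv t ht) (𝔉.mono hst _ hB)]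
  rw [← sub_eq_zero, ← integral_sub
      (integrable_compensatedDefault hτ hτnn hΛ hΛ0 hmono hcont hsurv ht).integrableOn
      (integrable_compensatedDefault hτ hτnn hΛ hΛ0 hmono hcont hsurv hs).integrableOn,
    integral_congr_ae (Eventually.of_forall (compensatedDefault_sub (τ := τ) (Λ := Λ) s t)),
    integral_sub hjump.integrableOn hcomp.integrableOn, hsurvival,
    setIntegral_stopped_sub_eq hτ hτnn hΛ hmono hcont hsurv hs hst hB, sub_self]

lemma setIntegral_compensatedDefault_inter_eq [IsFiniteMeasure μ] (hτ : Measurable τ)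
    (hτnn : ∀ ω, 0 ≤ τ ω)
    (hΛ : ∀ u, 0 ≤ u → Measurable[𝔉 u] (Λ u)) (hΛ0 : ∀ ω, Λ 0 ω = 0)
    (hmono : ∀ ω, MonotoneOn (Λ · ω) (Set.Ici 0))
    (hcont : ∀ ω, ContinuousOn (Λ · ω) (Set.Ici 0))
    (hsurv : ∀ u, 0 ≤ u → μ[{ω | u < τ ω}.indicator (fun _ => (1 : ℝ)) | 𝔉 u] =ᵐ[μ]
      fun ω => Real.exp (-Λ u ω))
    {r s t : ℝ} (hs : 0 ≤ s) (hst : s ≤ t) (hrs : r ≤ s) {B : Set Ω}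
    (hB : MeasurableSet[𝔉 s] B) :
    ∫ ω in B ∩ {ω | r < τ ω}, compensatedDefault τ Λ t ω ∂μ =
      ∫ ω in B ∩ {ω | r < τ ω}, compensatedDefault τ Λ s ω ∂μ := by
  have hint := fun u (hu : 0 ≤ u) =>
    integrable_compensatedDefault hτ hτnn hΛ hΛ0 hmono hcont hsurv (t := u) hu
  rw [← sub_eq_zero, ← integral_sub (hint t (hs.trans hst)).integrableOn (hint s hs).integrableOn,
    ← setIntegral_eq_of_subset_of_forall_sdiff_eq_zero (s := B ∩ {ω | r < τ ω})
      (f := fun ω => compensatedDefault τ Λ t ω - compensatedDefault τ Λ s ω)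
      (𝔉.le s _ hB) Set.inter_subset_left
      fun ω hω => sub_eq_zero.2 (compensatedDefault_eq_of_le
        ((not_lt.1 fun h => hω.2 ⟨hω.1, h⟩).trans hrs) hst),
    integral_sub (hint t (hs.trans hst)).integrableOn (hint s hs).integrableOn,
    setIntegral_compensatedDefault_eq hτ hτnn hΛ hΛ0 hmono hcont hsurv hs hst hB, sub_self]

end Hazard

theorem stmt7_general {Ω : Type*} {m𝔉 : MeasurableSpace Ω} (μ : Measure Ω) [IsProbabilityMeasure μ]
    (𝔉 : MeasureTheory.Filtration ℝ m𝔉)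
    (τ : Ω → ℝ) (hτmeas : Measurable τ) (hτnn : ∀ ω, 0 ≤ τ ω)
    (Λ : ℝ → Ω → ℝ)
    (hΛadapted : ∀ t : ℝ, 0 ≤ t → Measurable[𝔉 t] (Λ t))
    (hΛ0 : ∀ ω, Λ 0 ω = 0)
    (hΛmono : ∀ ω, MonotoneOn (fun t => Λ t ω) (Set.Ici 0))
    (hΛcont : ∀ ω, ContinuousOn (fun t => Λ t ω) (Set.Ici 0))
    (hsurv : ∀ t : ℝ, 0 ≤ t →
      μ[Set.indicator {ω | t < τ ω} (fun _ => (1 : ℝ)) | 𝔉 t]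
        =ᵐ[μ] fun ω => Real.exp (-Λ t ω))
    (ℱ : ℝ → MeasurableSpace Ω)
    (hℱ : ∀ s : ℝ, ℱ s = 𝔉 s ⊔ MeasurableSpace.generateFrom
        {A | ∃ r : ℝ, 0 ≤ r ∧ r ≤ s ∧ A = {ω | r < τ ω}})
    (M : ℝ → Ω → ℝ)
    (hM : ∀ t ω, M t ω
      = Set.indicator {ω' | τ ω' ≤ t} (fun _ => (1 : ℝ)) ω - Λ (min t (τ ω)) ω) :
    (∀ t : ℝ, 0 ≤ t → Integrable (fun ω => Λ (min t (τ ω)) ω) μ) ∧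
    (∀ t : ℝ, 0 ≤ t → StronglyMeasurable[ℱ t] (M t)) ∧
    (∀ t : ℝ, 0 ≤ t → Integrable (M t) μ) ∧
    (∀ s t : ℝ, 0 ≤ s → s ≤ t → μ[M t | ℱ s] =ᵐ[μ] M s) := by
  obtain rfl : ℱ = progressiveEnlargement 𝔉 τ := funext hℱ
  obtain rfl : M = compensatedDefault τ Λ := funext fun t => funext (hM t)
  have hint := fun t (ht : 0 ≤ t) => integrable_compensatedDefault hτmeas hτnn hΛadapted hΛ0
    hΛmono hΛcont hsurv ht
  have hmeas := fun t (ht : 0 ≤ t) =>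
    stronglyMeasurable_compensatedDefault hτnn hΛadapted hΛmono hΛcont ht
  refine ⟨fun t ht => integrable_stopped hτmeas hτnn hΛadapted hΛ0 hΛmono hΛcont hsurv ht,
    hmeas, hint, fun s t hs hst => ?_⟩
  refine (ae_eq_condExp_of_forall_setIntegral_eq (progressiveEnlargement_le hτmeas s)
    (hint t (hs.trans hst)) (fun _ _ _ => (hint s hs).integrableOn) (fun A hA _ => ?_)
    (hmeas s hs).aestronglyMeasurable).symm
  refine setIntegral_eq_of_isPiSystem (progressiveEnlargement_le hτmeas s) (hint s hs)
    (hint t (hs.trans hst)) (progressiveEnlargement_eq_generateFrom hτnn s)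
    (isPiSystem_progressiveGenerators s) ?_ ?_ hA
  · rintro _ ⟨B, r, hB, hrs, rfl⟩
    exact (setIntegral_compensatedDefault_inter_eq hτmeas hτnn hΛadapted hΛ0 hΛmono hΛcont hsurv
      hs hst hrs hB).symm
  · simpa using (setIntegral_compensatedDefault_eq hτmeas hτnn hΛadapted hΛ0 hΛmono hΛcont hsurv
      hs hst MeasurableSet.univ).symm

/-- In the hazard-process setup, for every `t ≥ 0` the random variable
`Λ_{t∧τ}` is integrable, and `M_t = 1_{τ ≤ t} − Λ_{t∧τ}` is a martingale with respect to
the enlarged filtration `ℱ_t = 𝔉̂_t ⊔ σ({τ > r} : r ∈ [0,t])` (adaptedness, integrability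
and the conditional-expectation property). -/
theorem stmt7 {Ω : Type*} {m𝔉 : MeasurableSpace Ω} (μ : Measure Ω) [IsProbabilityMeasure μ]
    (𝔉 : MeasureTheory.Filtration ℝ m𝔉)
    (τ : Ω → ℝ) (hτmeas : Measurable τ) (hτnn : ∀ ω, 0 ≤ τ ω)
    (Λ : ℝ → Ω → ℝ)
    (hΛadapted : ∀ t : ℝ, 0 ≤ t → Measurable[𝔉 t] (Λ t))
    (hΛ0 : ∀ ω, Λ 0 ω = 0)
    (hΛnn : ∀ t : ℝ, 0 ≤ t → ∀ ω, 0 ≤ Λ t ω)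
    (hΛmono : ∀ ω, MonotoneOn (fun t => Λ t ω) (Set.Ici 0))
    (hΛcont : ∀ ω, ContinuousOn (fun t => Λ t ω) (Set.Ici 0))
    (hΛtop : ∀ᵐ ω ∂μ, Filter.Tendsto (fun t => Λ t ω) Filter.atTop Filter.atTop)
    (hsurv : ∀ t : ℝ, 0 ≤ t →
      μ[Set.indicator {ω | t < τ ω} (fun _ => (1 : ℝ)) | 𝔉 t]
        =ᵐ[μ] fun ω => Real.exp (-Λ t ω))
    (ℱ : ℝ → MeasurableSpace Ω)
    (hℱ : ∀ s : ℝ, ℱ s = 𝔉 s ⊔ MeasurableSpace.generateFrom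
        {A | ∃ r : ℝ, 0 ≤ r ∧ r ≤ s ∧ A = {ω | r < τ ω}})
    (M : ℝ → Ω → ℝ)
    (hM : ∀ t ω, M t ω
      = Set.indicator {ω' | τ ω' ≤ t} (fun _ => (1 : ℝ)) ω - Λ (min t (τ ω)) ω) :
    (∀ t : ℝ, 0 ≤ t → Integrable (fun ω => Λ (min t (τ ω)) ω) μ) ∧
    (∀ t : ℝ, 0 ≤ t → StronglyMeasurable[ℱ t] (M t)) ∧
    (∀ t : ℝ, 0 ≤ t → Integrable (M t) μ) ∧
    (∀ s t : ℝ, 0 ≤ s → s ≤ t → μ[M t | ℱ s] =ᵐ[μ] M s) :=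
  stmt7_general μ 𝔉 τ hτmeas hτnn Λ hΛadapted hΛ0 hΛmono hΛcont hsurv ℱ hℱ M hM
end
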